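/- Let A be a hereditary tree (H-tree) on the unit sphere S_X of a Banach space X, and let c > 1. Then I_w(A) = I_w(A ∩ {(x_1,...,x_n) ∈ S_X^{<ω} : (x_1,...,x_n) is c-basic}). -/

import Mathlib

open Metric Set Filter TopologicalSpace
open scoped ENNReal

noncomputable section

/-- A set `U` in the dual of `X` is weak\*-open if every point of `U` has a basic weak\*
neighborhood (determined by finitely many points of `X`) contained in `U`. -/
def IsWeakStarOpen {X : Type*} [NormedAddCommGroup X] [NormedSpace ℝ X]
    (U : Set (X →L[ℝ] ℝ)) : Prop :=
  ∀ f ∈ U, ∃ (n : ℕ) (x : Fin n → X) (δ : ℝ), 0 < δ ∧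
    ∀ g : X →L[ℝ] ℝ, (∀ i, |g (x i) - f (x i)| < δ) → g ∈ U

/-- The Szlenk derivation: remove all points of `K` lying in a relatively weak\*-open
subset of `K` of norm diameter less than `ε`. -/
def szlenkDeriv {X : Type*} [NormedAddCommGroup X] [NormedSpace ℝ X]
    (ε : ℝ) (K : Set (X →L[ℝ] ℝ)) : Set (X →L[ℝ] ℝ) :=
  {f | f ∈ K ∧ ¬ ∃ U : Set (X →L[ℝ] ℝ), IsWeakStarOpen U ∧ f ∈ U ∧
    EMetric.diam (K ∩ U) < ENNReal.ofReal ε}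

/-- The dentability derivation: remove all points of `K` lying in a weak\*-slice of `K`
of norm diameter less than `ε`. -/
def dentDeriv {X : Type*} [NormedAddCommGroup X] [NormedSpace ℝ X]
    (ε : ℝ) (K : Set (X →L[ℝ] ℝ)) : Set (X →L[ℝ] ℝ) :=
  {f | f ∈ K ∧ ¬ ∃ (x : X) (t : ℝ), t < f x ∧
    EMetric.diam {g | g ∈ K ∧ t < g x} < ENNReal.ofReal ε}

/-- Transfinite iteration of a set derivation, with intersections at limit stages. -/
def derivIter {α : Type*} (D : Set α → Set α) (K : Set α) (o : Ordinal.{0}) : Set α :=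
  Ordinal.limitRecOn o K (fun _ ih => D ih) (fun o _ ih => ⋂ (β : {β : Ordinal.{0} // β < o}), ih β.1 β.2)

open scoped Classical in
/-- The ordinal index associated with a derivation: the least ordinal at which the iterated
derived set of `K` is empty, or `⊤` (i.e. `∞`) if the derived sets are never empty. -/
def derivIndex {α : Type*} (D : Set α → Set α) (K : Set α) : WithTop Ordinal.{0} :=
  if ∃ o : Ordinal.{0}, derivIter D K o = ∅
    then ((sInf {o : Ordinal.{0} | derivIter D K o = ∅} : Ordinal.{0}) : WithTop Ordinal.{0})
    else ⊤

/-- The `ε`-Szlenk index `Sz(X,ε)`. -/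
def SzEps (X : Type*) [NormedAddCommGroup X] [NormedSpace ℝ X] (ε : ℝ) : WithTop Ordinal.{0} :=
  derivIndex (szlenkDeriv (X := X) ε) (closedBall (0 : X →L[ℝ] ℝ) 1)

/-- The Szlenk index `Sz(X) = sup_{ε > 0} Sz(X,ε)`. -/
def Sz (X : Type*) [NormedAddCommGroup X] [NormedSpace ℝ X] : WithTop Ordinal.{0} :=
  ⨆ ε : {ε : ℝ // 0 < ε}, SzEps X ε.1

/-- The `ε`-weak\*-dentability index `Dz(X,ε)`. -/
def DzEps (X : Type*) [NormedAddCommGroup X] [NormedSpace ℝ X] (ε : ℝ) : WithTop Ordinal.{0} :=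
  derivIndex (dentDeriv (X := X) ε) (closedBall (0 : X →L[ℝ] ℝ) 1)

/-- The weak\*-dentability index `Dz(X) = sup_{ε > 0} Dz(X,ε)`. -/
def Dz (X : Type*) [NormedAddCommGroup X] [NormedSpace ℝ X] : WithTop Ordinal.{0} :=
  ⨆ ε : {ε : ℝ // 0 < ε}, DzEps X ε.1

/-- `L_p(X)`: the space of `X`-valued Bochner `p`-integrable functions on `[0,1]`. -/
abbrev LpOn (X : Type*) [NormedAddCommGroup X] (p : ℝ≥0∞) :=
  MeasureTheory.Lp (α := ℝ) X p ((MeasureTheory.volume : MeasureTheory.Measure ℝ).restrict (Icc 0 1))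

/-- A normalized weakly null sequence. -/
def IsNormalizedWeaklyNull {X : Type*} [NormedAddCommGroup X] [NormedSpace ℝ X] (y : ℕ → X) : Prop :=
  (∀ n, ‖y n‖ = 1) ∧ ∀ f : X →L[ℝ] ℝ, Tendsto (fun n => f (y n)) atTop (nhds 0)

/-- A tree on the unit sphere of `X`: a nonempty set of finite sequences of norm one vectors,
closed under taking initial segments. -/
def IsTreeOnSphere {X : Type*} [NormedAddCommGroup X] (A : Set (List X)) : Prop :=
  A.Nonempty ∧ (∀ l ∈ A, ∀ x ∈ l, ‖x‖ = 1) ∧ ∀ l ∈ A, ∀ l' : List X, l' <+: l → l' ∈ A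

/-- A hereditary tree (H-tree) on the unit sphere of `X`: a tree containing all
subsequences of each of its members. -/
def IsHTree {X : Type*} [NormedAddCommGroup X] (A : Set (List X)) : Prop :=
  IsTreeOnSphere A ∧ ∀ l ∈ A, ∀ l' : List X, List.Sublist l' l → l' ∈ A

/-- The weak derivative of a tree: all members which admit extensions inside the tree along a
normalized weakly null sequence, together with all initial segments of such members. -/
def weakDeriv {X : Type*} [NormedAddCommGroup X] [NormedSpace ℝ X] (A : Set (List X)) :
    Set (List X) :=
  {l | ∃ m ∈ A, l <+: m ∧ ∃ y : ℕ → X, IsNormalizedWeaklyNull y ∧ ∀ n, m ++ [y n] ∈ A}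

/-- The weak index `I_w` of a tree on the unit sphere. -/
def Iw {X : Type*} [NormedAddCommGroup X] [NormedSpace ℝ X] (A : Set (List X)) :
    WithTop Ordinal.{0} :=
  derivIndex weakDeriv A

/-- The tree `F_ρ^X` of finite normalized sequences which `ρ`-dominate the positive part of
the `ℓ_1` norm. -/
def FTree (X : Type*) [NormedAddCommGroup X] [NormedSpace ℝ X] (ρ : ℝ) : Set (List X) :=
  {l | (∀ x ∈ l, ‖x‖ = 1) ∧ ∀ a : ℕ → ℝ, (∀ i, 0 ≤ a i) →
    ρ * (∑ i ∈ Finset.range l.length, a i) ≤ ‖∑ i ∈ Finset.range l.length, a i • l.getD i 0‖}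

/-- A finite sequence is `c`-basic if partial sums of linear combinations are dominated,
with constant `c`, by the full linear combination. -/
def IsCBasicSeq {X : Type*} [NormedAddCommGroup X] [NormedSpace ℝ X] (c : ℝ) (l : List X) : Prop :=
  ∀ a : ℕ → ℝ, ∀ m ≤ l.length,
    ‖∑ i ∈ Finset.range m, a i • l.getD i 0‖ ≤
      c * ‖∑ i ∈ Finset.range l.length, a i • l.getD i 0‖

/-- An order isomorphism between trees: injective on `A`, mapping `A` into `B`, and preserving
and reflecting the strict initial-segment order. -/
def IsTreeOrderIso {X Y : Type*} (A : Set (List X)) (B : Set (List Y))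
    (Ψ : List X → List Y) : Prop :=
  (∀ l ∈ A, Ψ l ∈ B) ∧ Set.InjOn Ψ A ∧
    ∀ l ∈ A, ∀ m ∈ A, ((Ψ l <+: Ψ m ∧ Ψ l ≠ Ψ m) ↔ (l <+: m ∧ l ≠ m))

/-- Condition (2.1.1): `Ψ` maps weakly null extensions in `A` to weakly null extensions. -/
def MapsWeaklyNullExtensions {X Y : Type*} [NormedAddCommGroup X] [NormedSpace ℝ X]
    [NormedAddCommGroup Y] [NormedSpace ℝ Y] (A : Set (List X)) (Ψ : List X → List Y) : Prop :=
  ∀ l ∈ A, ∀ x : ℕ → X, IsNormalizedWeaklyNull x → (∀ k, l ++ [x k] ∈ A) →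
    ∃ y : ℕ → Y, IsNormalizedWeaklyNull y ∧ ∀ k, Ψ (l ++ [x k]) = Ψ l ++ [y k]

/-- `C([0,β])`: the space of continuous functions on the ordinal interval `[0,β]`. -/
abbrev COrd (β : Ordinal.{0}) := BoundedContinuousFunction (Iic β) ℝ

/-! Given `l` in the `α`-th derived tree of `A` that is `K_n`-basic, where `n = |l|` and
`K_n ↑ c` strictly, one shows by induction on `α` that `l` survives `α` derivations of the
`c`-basic part of `A`. At a successor step, `l` is extended along a normalized weakly null
sequence `(y_i)`; by a Mazur-type perturbation argument, for large `i` the vector `y_i` is almost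
orthogonal to the finite-dimensional span of `l`, i.e. `K_n ‖e‖ ≤ K_{n+1} ‖e + b y_i‖` for `e` in
that span, which makes `l ++ [y_i]` again `K_{n+1}`-basic. Applied to the empty sequence this
shows that both derived trees become empty at the same ordinals. -/

section DerivIter

variable {α : Type*} (D : Set α → Set α) (K : Set α)

theorem derivIter_zero : derivIter D K 0 = K :=
  Ordinal.limitRecOn_zero _ _ _

theorem derivIter_add_one (o : Ordinal.{0}) : derivIter D K (o + 1) = D (derivIter D K o) :=
  Ordinal.limitRecOn_add_one _ _ _ _

theorem derivIter_limit {o : Ordinal.{0}} (ho : Order.IsSuccLimit o) :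
    derivIter D K o = ⋂ β : {β : Ordinal.{0} // β < o}, derivIter D K β.1 :=
  Ordinal.limitRecOn_limit _ _ _ _ ho

variable {D K}

theorem derivIter_mono (hD : Monotone D) {K' : Set α} (h : K ⊆ K') (o : Ordinal.{0}) :
    derivIter D K o ⊆ derivIter D K' o := by
  induction o using Ordinal.limitRecOn with
  | zero => simpa only [derivIter_zero] using h
  | add_one o ih => simpa only [derivIter_add_one] using hD ih
  | limit o ho ih =>
    rw [derivIter_limit _ _ ho, derivIter_limit _ _ ho]
    exact iInter_mono fun β => ih β.1 β.2

theorem derivIndex_congr {D' : Set α → Set α} {K' : Set α}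
    (h : ∀ o, derivIter D K o = ∅ ↔ derivIter D' K' o = ∅) :
    derivIndex D K = derivIndex D' K' := by
  classical
  have hset : {o | derivIter D K o = ∅} = {o | derivIter D' K' o = ∅} := Set.ext h
  unfold derivIndex
  rw [hset]
  exact if_congr (exists_congr h) rfl rfl

end DerivIter

section WeakDeriv

variable {X : Type*} [NormedAddCommGroup X] [NormedSpace ℝ X]

theorem IsNormalizedWeaklyNull.comp_tendsto {y : ℕ → X} (hy : IsNormalizedWeaklyNull y)
    {φ : ℕ → ℕ} (hφ : Tendsto φ atTop atTop) : IsNormalizedWeaklyNull (y ∘ φ) :=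
  ⟨fun n => hy.1 (φ n), fun f => (hy.2 f).comp hφ⟩

theorem weakDeriv_mono : Monotone (weakDeriv (X := X)) := by
  rintro A B hAB l ⟨m, hm, hlm, y, hy, hext⟩
  exact ⟨m, hAB hm, hlm, y, hy, fun n => hAB (hext n)⟩

def IsHereditary {Y : Type*} (A : Set (List Y)) : Prop :=
  ∀ l ∈ A, ∀ l' : List Y, l'.Sublist l → l' ∈ A

variable {A : Set (List X)}

theorem IsHereditary.mem_weakDeriv_iff (hA : IsHereditary A) {l : List X} :
    l ∈ weakDeriv A ↔ ∃ y : ℕ → X, IsNormalizedWeaklyNull y ∧ ∀ n, l ++ [y n] ∈ A := by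
  constructor
  · rintro ⟨m, -, hlm, y, hy, hext⟩
    exact ⟨y, hy, fun n => hA _ (hext n) _ (hlm.sublist.append (List.Sublist.refl _))⟩
  · rintro ⟨y, hy, hext⟩
    exact ⟨l, hA _ (hext 0) _ (List.sublist_append_left _ _), List.prefix_refl l, y, hy, hext⟩

theorem isHereditary_weakDeriv (hA : IsHereditary A) : IsHereditary (weakDeriv A) := by
  intro l hl l' hl'
  obtain ⟨y, hy, hext⟩ := hA.mem_weakDeriv_iff.1 hl
  exact hA.mem_weakDeriv_iff.2 ⟨y, hy, fun n => hA _ (hext n) _ (hl'.append (List.Sublist.refl _))⟩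

theorem isHereditary_derivIter (hA : IsHereditary A) (o : Ordinal.{0}) :
    IsHereditary (derivIter weakDeriv A o) := by
  induction o using Ordinal.limitRecOn with
  | zero => rwa [derivIter_zero]
  | add_one o ih => simpa only [derivIter_add_one] using isHereditary_weakDeriv ih
  | limit o ho ih =>
    rw [derivIter_limit _ _ ho]
    exact fun l hl l' hl' => mem_iInter.2 fun β => ih β.1 β.2 l (mem_iInter.1 hl β) l' hl'

end WeakDeriv

section AlmostOrthogonal

variable {X : Type*} [NormedAddCommGroup X] [NormedSpace ℝ X]

theorem one_sub_three_mul_le_norm_add_smul {u x y : X} {g : X →L[ℝ] ℝ} {δ : ℝ}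
    (hu : ‖u‖ ≤ 1) (hy : ‖y‖ = 1) (hg : ‖g‖ ≤ 1) (hgx : g x = 1) (hux : ‖u - x‖ < δ)
    (hgy : |g y| < δ) (b : ℝ) : 1 - 3 * δ ≤ ‖u + b • y‖ := by
  have hδ : 0 < δ := (norm_nonneg _).trans_lt hux
  rcases le_or_gt |b| 2 with hb | hb
  · have hg_le : g (u + b • y) ≤ ‖u + b • y‖ :=
      (le_abs_self _).trans ((g.le_opNorm _).trans (mul_le_of_le_one_left (norm_nonneg _) hg))
    have hgux : |g (u - x)| < δ :=
      ((g.le_opNorm _).trans (mul_le_of_le_one_left (norm_nonneg _) hg)).trans_lt hux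
    have hbgy : |b * g y| ≤ 2 * δ := by
      rw [abs_mul]; exact mul_le_mul hb hgy.le (abs_nonneg _) zero_le_two
    have hsplit : g (u + b • y) = g x + g (u - x) + b * g y := by
      simp only [map_add, map_sub, map_smul, smul_eq_mul]; ring
    linarith [(abs_le.1 hbgy).1, (abs_lt.1 hgux).1]
  · have : |b| - 1 ≤ ‖u + b • y‖ := by
      calc |b| - 1 ≤ ‖b • y‖ - ‖u‖ := by rw [norm_smul, hy, Real.norm_eq_abs]; linarith
        _ ≤ ‖u + b • y‖ := by rw [add_comm]; exact norm_sub_le_norm_add _ _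
    linarith

theorem mul_norm_le_norm_add_smul_of_norm_eq_one {E : Submodule ℝ X} {z : X} {r : ℝ}
    (h : ∀ u ∈ E, ‖u‖ = 1 → ∀ b : ℝ, r ≤ ‖u + b • z‖) (e : X) (he : e ∈ E) (b : ℝ) :
    r * ‖e‖ ≤ ‖e + b • z‖ := by
  rcases eq_or_ne e 0 with rfl | he0
  · simp
  have hpos : 0 < ‖e‖ := norm_pos_iff.2 he0
  have hscale : e + b • z = ‖e‖ • (‖e‖⁻¹ • e + (‖e‖⁻¹ * b) • z) := by
    rw [smul_add, smul_smul, smul_smul, mul_inv_cancel₀ hpos.ne', ← mul_assoc,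
      mul_inv_cancel₀ hpos.ne', one_smul, one_mul]
  have hu : ‖‖e‖⁻¹ • e‖ = 1 := by rw [norm_smul, norm_inv, norm_norm, inv_mul_cancel₀ hpos.ne']
  calc r * ‖e‖ ≤ ‖‖e‖⁻¹ • e + (‖e‖⁻¹ * b) • z‖ * ‖e‖ :=
        mul_le_mul_of_nonneg_right (h _ (E.smul_mem _ he) hu _) hpos.le
    _ = ‖e + b • z‖ := by rw [hscale, norm_smul, norm_norm, mul_comm]

theorem IsNormalizedWeaklyNull.eventually_mul_norm_le_norm_add_smul {y : ℕ → X}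
    (hy : IsNormalizedWeaklyNull y) (E : Submodule ℝ X) [FiniteDimensional ℝ E] {r : ℝ}
    (hr : r < 1) : ∀ᶠ i in atTop, ∀ e ∈ E, ∀ b : ℝ, r * ‖e‖ ≤ ‖e + b • y i‖ := by
  set δ := (1 - r) / 3
  have hδ : 0 < δ := div_pos (sub_pos.2 hr) three_pos
  have hS : IsCompact ((↑) '' sphere (0 : E) 1 : Set X) :=
    (isCompact_sphere 0 1).image continuous_subtype_val
  obtain ⟨t, htS, ht, hcover⟩ := hS.finite_cover_balls hδ
  choose g hg hgx using fun x : X => exists_dual_vector'' ℝ x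
  have hsmall : ∀ᶠ i in atTop, ∀ x ∈ t, |g x (y i)| < δ :=
    (eventually_all_finite ht).2 fun x _ => by
      have : Tendsto (fun i => |g x (y i)|) atTop (nhds 0) := by simpa using (hy.2 (g x)).abs
      exact this.eventually_lt_const hδ
  filter_upwards [hsmall] with i hi
  refine mul_norm_le_norm_add_smul_of_norm_eq_one fun u hu hu1 b => ?_
  obtain ⟨x, hxt, hux⟩ := mem_iUnion₂.1 (hcover ⟨⟨u, hu⟩, by simpa using hu1, rfl⟩)
  have hx1 : ‖x‖ = 1 := by
    obtain ⟨v, hv, rfl⟩ := htS hxt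
    simpa using hv
  have := one_sub_three_mul_le_norm_add_smul hu1.le (hy.1 i) (hg x) (by rw [hgx, hx1]; rfl)
    (by rwa [← dist_eq_norm]) (hi x hxt) b
  have h3δ : 1 - 3 * δ = r := by simp only [δ]; ring
  linarith

end AlmostOrthogonal

section Basic

variable {X : Type*} [NormedAddCommGroup X] [NormedSpace ℝ X]

theorem IsCBasicSeq.mono {c c' : ℝ} {l : List X} (h : IsCBasicSeq c l) (hc : c ≤ c') :
    IsCBasicSeq c' l :=
  fun a m hm => (h a m hm).trans (mul_le_mul_of_nonneg_right hc (norm_nonneg _))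

theorem isCBasicSeq_nil (c : ℝ) : IsCBasicSeq c ([] : List X) := by
  intro a m hm
  obtain rfl : m = 0 := Nat.le_zero.1 hm
  simp

theorem sum_range_smul_getD_mem_span (l : List X) (a : ℕ → ℝ) {m : ℕ} (hm : m ≤ l.length) :
    ∑ i ∈ Finset.range m, a i • l.getD i 0 ∈ Submodule.span ℝ {x | x ∈ l} := by
  refine Submodule.sum_mem _ fun i hi => Submodule.smul_mem _ _ (Submodule.subset_span ?_)
  have hil : i < l.length := (Finset.mem_range.1 hi).trans_le hm
  rw [List.getD_eq_getElem l 0 hil]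
  exact List.getElem_mem hil

theorem sum_range_smul_getD_append (l l' : List X) (a : ℕ → ℝ) {m : ℕ} (hm : m ≤ l.length) :
    ∑ i ∈ Finset.range m, a i • (l ++ l').getD i 0 = ∑ i ∈ Finset.range m, a i • l.getD i 0 :=
  Finset.sum_congr rfl fun i hi => by
    rw [List.getD_append _ _ _ _ ((Finset.mem_range.1 hi).trans_le hm)]

theorem IsCBasicSeq.append_singleton {K K' : ℝ} {l : List X} {z : X} (hl : IsCBasicSeq K l)
    (hK' : 1 ≤ K')
    (hz : ∀ e ∈ Submodule.span ℝ {x | x ∈ l}, ∀ b : ℝ, K * ‖e‖ ≤ K' * ‖e + b • z‖) :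
    IsCBasicSeq K' (l ++ [z]) := by
  intro a m hm
  have hfull : ∑ i ∈ Finset.range (l ++ [z]).length, a i • (l ++ [z]).getD i 0
      = ∑ i ∈ Finset.range l.length, a i • l.getD i 0 + a l.length • z := by
    rw [List.length_append, List.length_singleton, Finset.sum_range_succ,
      sum_range_smul_getD_append _ _ _ le_rfl, List.getD_append_right _ _ _ _ le_rfl]
    simp
  rcases Nat.lt_or_ge l.length m with hlm | hml
  · obtain rfl : m = (l ++ [z]).length := le_antisymm hm (by simpa using hlm)
    exact le_mul_of_one_le_left (norm_nonneg _) hK'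
  · rw [sum_range_smul_getD_append _ _ _ hml, hfull]
    exact (hl a m hml).trans
      (hz _ (sum_range_smul_getD_mem_span l a le_rfl) _)

end Basic

section Restriction

variable {X : Type*} [NormedAddCommGroup X] [NormedSpace ℝ X]

theorem IsHereditary.mem_derivIter_inter_isCBasicSeq {A : Set (List X)} (hA : IsHereditary A)
    {c : ℝ} {K : ℕ → ℝ} (hK : StrictMono K) (hK0 : 1 ≤ K 0) (hKc : ∀ n, K n ≤ c)
    (o : Ordinal.{0}) (l : List X) (hl : l ∈ derivIter weakDeriv A o)
    (hlK : IsCBasicSeq (K l.length) l) :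
    l ∈ derivIter weakDeriv (A ∩ {l | IsCBasicSeq c l}) o := by
  induction o using Ordinal.limitRecOn generalizing l with
  | zero =>
    rw [derivIter_zero] at hl ⊢
    exact ⟨hl, hlK.mono (hKc _)⟩
  | add_one o ih =>
    rw [derivIter_add_one] at hl ⊢
    obtain ⟨y, hy, hext⟩ := (isHereditary_derivIter hA o).mem_weakDeriv_iff.1 hl
    have hKpos : 0 < K (l.length + 1) := zero_lt_one.trans_le (hK0.trans (hK.monotone (by omega)))
    have : FiniteDimensional ℝ (Submodule.span ℝ {x | x ∈ l}) :=
      FiniteDimensional.span_of_finite ℝ l.finite_toSet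
    obtain ⟨N, hN⟩ := eventually_atTop.1 (hy.eventually_mul_norm_le_norm_add_smul
      (Submodule.span ℝ {x | x ∈ l}) ((div_lt_one hKpos).2 (hK (Nat.lt_succ_self _))))
    refine ⟨l, ih l (isHereditary_derivIter hA o _ (hext 0) _ (List.sublist_append_left _ _)) hlK,
      List.prefix_refl l, y ∘ (· + N), hy.comp_tendsto (tendsto_add_atTop_nat N),
      fun k => ih _ (hext (k + N)) ?_⟩
    rw [List.length_append, List.length_singleton]
    refine hlK.append_singleton (hK0.trans (hK.monotone (Nat.zero_le _))) fun e he b => ?_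
    have := hN (k + N) (Nat.le_add_left _ _) e he b
    rwa [div_mul_eq_mul_div, div_le_iff₀ hKpos, mul_comm ‖_‖] at this
  | limit o ho ih =>
    rw [derivIter_limit _ _ ho] at hl ⊢
    exact mem_iInter.2 fun β => ih β.1 β.2 l (mem_iInter.1 hl β) hlK

theorem IsHereditary.derivIter_inter_isCBasicSeq_eq_empty_iff {A : Set (List X)}
    (hA : IsHereditary A) {c : ℝ} (hc : 1 < c) (o : Ordinal.{0}) :
    derivIter weakDeriv (A ∩ {l | IsCBasicSeq c l}) o = ∅ ↔ derivIter weakDeriv A o = ∅ := by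
  refine ⟨fun h => ?_, fun h => subset_empty_iff.1 <|
    h ▸ derivIter_mono weakDeriv_mono inter_subset_left o⟩
  by_contra hne
  obtain ⟨l, hl⟩ := nonempty_iff_ne_empty.2 hne
  have hK : StrictMono fun n : ℕ => c - (c - 1) / 2 ^ n := strictMono_nat_of_lt_succ fun n => by
    rw [pow_succ, ← div_div]
    linarith [half_lt_self (div_pos (sub_pos.2 hc) (pow_pos two_pos n))]
  have hnil := hA.mem_derivIter_inter_isCBasicSeq hK (by simp)
    (fun n => sub_le_self _ (div_nonneg (sub_pos.2 hc).le (pow_pos two_pos n).le)) o []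
    (isHereditary_derivIter hA o l hl [] (List.nil_sublist l)) (isCBasicSeq_nil _)
  rwa [h] at hnil

end Restriction

theorem weak_index_eq_basic_restriction_general
    (X : Type) [NormedAddCommGroup X] [NormedSpace ℝ X]
    (A : Set (List X)) (hA : IsHTree A) (c : ℝ) (hc : 1 < c) :
    Iw A = Iw (A ∩ {l : List X | IsCBasicSeq c l}) := by
  have hA' : IsHereditary A := hA.2
  exact derivIndex_congr fun o => (hA'.derivIter_inter_isCBasicSeq_eq_empty_iff hc o).symm

/-- **Proposition 2.3.** For a hereditary tree `A` on the unit sphere of `X` and `c > 1`,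
the weak index of `A` equals the weak index of its subset of `c`-basic sequences. -/
theorem weak_index_eq_basic_restriction
    (X : Type) [NormedAddCommGroup X] [NormedSpace ℝ X] [CompleteSpace X]
    (A : Set (List X)) (hA : IsHTree A) (c : ℝ) (hc : 1 < c) :
    Iw A = Iw (A ∩ {l : List X | IsCBasicSeq c l}) :=
  weak_index_eq_basic_restriction_general X A hA c hc

end
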